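/- arXiv:2212.14370 — 2 statements merged into one kernel-verified Lean document; each statement's English description precedes it below -/
import Mathlib

section
/- Simplification of the complexity maximum (part of Corollary 4): Let M, C, L, μ, α be positive reals with C ≤ M, μ ≤ L, and 1 < α. If α ≤ (M+C)/(2M) + √( 2LC/(μM) + ((M−C)/(2M))² ), then (M/C)·α ≤ 1 + (2/(α−1))·(L/μ); consequently max{ 1 + 2L/((α−1)μ), (M/C)·α } = 1 + 2L/((α−1)μ). -/
/-- **Part of Corollary 4.** Simplification of the complexity maximum: for positive reals
`M, C, L, μ, α` with `C ≤ M`, `μ ≤ L`, `1 < α`, if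
`α ≤ (M+C)/(2M) + √(2LC/(μM) + ((M−C)/(2M))²)` then `(M/C)·α ≤ 1 + (2/(α−1))·(L/μ)`, and
consequently `max{1 + 2L/((α−1)μ), (M/C)·α} = 1 + 2L/((α−1)μ)`. -/
theorem stmt9 (M C L μ α : ℝ) (hM : 0 < M) (hC : 0 < C) (hL : 0 < L) (hμ : 0 < μ)
    (hCM : C ≤ M) (hμL : μ ≤ L) (hα : 1 < α)
    (hcond : α ≤ (M + C) / (2 * M) +
      Real.sqrt (2 * L * C / (μ * M) + ((M - C) / (2 * M)) ^ 2)) :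
    M / C * α ≤ 1 + 2 / (α - 1) * (L / μ) ∧
      max (1 + 2 * L / ((α - 1) * μ)) (M / C * α) = 1 + 2 * L / ((α - 1) * μ) := by
  have hα1 : 0 < α - 1 := by linarith
  set D : ℝ := 2 * L * C / (μ * M) + ((M - C) / (2 * M)) ^ 2 with hDdef
  have hD0 : 0 ≤ D := by positivity
  have hsq : Real.sqrt D ^ 2 = D := Real.sq_sqrt hD0
  have h0 : (0:ℝ) ≤ (M - C) / (2 * M) := div_nonneg (by linarith) (by linarith)
  have hs : (M - C) / (2 * M) ≤ Real.sqrt D := by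
    have h1 : ((M - C) / (2 * M)) ^ 2 ≤ D := by
      have : 0 ≤ 2 * L * C / (μ * M) := by positivity
      linarith
    have h2 := Real.sqrt_le_sqrt h1
    rwa [Real.sqrt_sq h0] at h2
  have hb : 1 - (M + C) / (2 * M) = (M - C) / (2 * M) := by field_simp; ring
  have hlow : -(Real.sqrt D) ≤ α - (M + C) / (2 * M) := by
    have := Real.sqrt_nonneg D
    linarith
  have hup : α - (M + C) / (2 * M) ≤ Real.sqrt D := by linarith
  have hquad : (α - (M + C) / (2 * M)) ^ 2 ≤ D := by
    calc (α - (M + C) / (2 * M)) ^ 2 ≤ Real.sqrt D ^ 2 := sq_le_sq' hlow hup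
    _ = D := hsq
  have hMne : M ≠ 0 := hM.ne'
  have hμne : μ ≠ 0 := hμ.ne'
  have h5 : (2 * M) ^ 2 * μ * (α - (M + C) / (2 * M)) ^ 2
      = μ * (α * (2 * M) - (M + C)) ^ 2 := by field_simp
  have h6 : (2 * M) ^ 2 * μ * D = 8 * L * C * M + (M - C) ^ 2 * μ := by
    rw [hDdef]; field_simp; ring
  have h7 := mul_le_mul_of_nonneg_left hquad (by positivity : (0:ℝ) ≤ (2 * M) ^ 2 * μ)
  rw [h5, h6] at h7
  have key : M * μ * α ^ 2 - (M + C) * μ * α + C * μ - 2 * L * C ≤ 0 := by nlinarith [h7, hM]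
  have h : M * μ * α * (α - 1) ≤ C * μ * (α - 1) + 2 * L * C := by nlinarith [key]
  have main : M / C * α ≤ 1 + 2 / (α - 1) * (L / μ) := by
    have e1 : M / C * α = (M * μ * α * (α - 1)) / (C * μ * (α - 1)) := by
      field_simp
    have e2 : 1 + 2 / (α - 1) * (L / μ) = (C * μ * (α - 1) + 2 * L * C) / (C * μ * (α - 1)) := by
      field_simp
    rw [e1, e2]
    apply div_le_div_of_nonneg_right h (by positivity)
  have heq : 1 + 2 / (α - 1) * (L / μ) = 1 + 2 * L / ((α - 1) * μ) := by
    rw [div_mul_div_comm]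
  exact ⟨main, max_eq_left (heq ▸ main)⟩
end

section
/- Gradient descent satisfies the inexactness requirement of 5GCS (local-solver guarantee for Theorem 2): In the 5GCS setup, suppose τ ≥ (8/3)√(Lμ/(MC)). Fix m and a center point x̂ ∈ ℝ^d and a dual u_m ∈ ℝ^d, let ψ_m(y) = F_m(y) + (τ/2)‖y − (x̂ + u_m/τ)‖² with unique minimizer y⋆_m, and let y^K be the K-th iterate of gradient descent on ψ_m with stepsize 1/(L_F + τ) started at y⁰ = x̂. If K ≥ ( (3/4)√((C/M)(L/μ)) + 2 ) · log(4L/μ), then (4μL_F²/(3Mτ²))·‖y^K − y⋆_m‖² + (L_F/τ²)·‖∇ψ_m(y^K)‖² ≤ (μ/(6M))·‖x̂ − y⋆_m‖². -/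
set_option maxHeartbeats 1000000

noncomputable section

/-- Euclidean space ℝ^d. -/
abbrev Euc (d : ℕ) : Type := EuclideanSpace ℝ (Fin d)

/-- `K` steps of gradient descent with stepsize `η` on `φ` started from `y0`. -/
def gdIter (d : ℕ) (η : ℝ) (φ : Euc d → ℝ) (y0 : Euc d) : ℕ → Euc d
  | 0 => y0
  | k + 1 => gdIter d η φ y0 k - η • gradient φ (gdIter d η φ y0 k)

section Helpers

open Real Set
open scoped RealInnerProductSpace

variable {d : ℕ}


lemma derivPath {g : Euc d → ℝ} {G : Euc d → Euc d}
    (hg : ∀ z, HasGradientAt g (G z) z) (x v : Euc d) (t : ℝ) :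
    HasDerivAt (fun t : ℝ => g (x + t • v)) ⟪G (x + t • v), v⟫ t := by
  have hpt : HasDerivAt (fun t : ℝ => x + t • v) v t := by
    simpa using ((hasDerivAt_id t).smul_const v).const_add x
  have := (hg (x + t • v)).hasFDerivAt.comp_hasDerivAt t hpt
  simpa [Function.comp_def, InnerProductSpace.toDual_apply_apply] using this

lemma convexPath {g : Euc d → ℝ} (hconv : ConvexOn ℝ Set.univ g) (x v : Euc d) :
    ConvexOn ℝ Set.univ (fun t : ℝ => g (x + t • v)) := by
  have h := hconv.comp_affineMap (AffineMap.lineMap x (x + v))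
  have he : (fun t : ℝ => g (x + t • v)) = g ∘ (AffineMap.lineMap x (x + v)) := by
    funext t
    simp only [Function.comp_apply, AffineMap.lineMap_apply_module, add_sub_cancel_left]
    congr 1
    module
  rw [he]
  simpa using h

lemma grad_lower {g : Euc d → ℝ} {G : Euc d → Euc d}
    (hconv : ConvexOn ℝ Set.univ g) (hg : ∀ z, HasGradientAt g (G z) z) (x y : Euc d) :
    g x + ⟪G x, y - x⟫ ≤ g y := by
  set v := y - x with hv
  have hφ := convexPath hconv x v
  have hd := derivPath hg x v 0
  have h0 : x + (0:ℝ) • v = x := by simp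
  rw [h0] at hd
  have h := hφ.le_slope_of_hasDerivAt (Set.mem_univ (0:ℝ)) (Set.mem_univ (1:ℝ)) one_pos hd
  rw [slope_def_field] at h
  simp only [one_smul, zero_smul, add_zero, sub_zero, div_one] at h
  have hxv : x + v = y := by rw [hv]; abel
  rw [hxv] at h
  linarith

lemma grad_upper {g : Euc d → ℝ} {G : Euc d → Euc d} {ℓ : ℝ} (hℓ : 0 ≤ ℓ)
    (hg : ∀ z, HasGradientAt g (G z) z)
    (hmono : ∀ a b, ⟪G a - G b, a - b⟫ ≤ ℓ * ‖a - b‖ ^ 2) (x y : Euc d) :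
    g y ≤ g x + ⟪G x, y - x⟫ + ℓ / 2 * ‖y - x‖ ^ 2 := by
  set v := y - x with hv
  set χ : ℝ → ℝ := fun t => g (x + t • v) - t * ⟪G x, v⟫ - ℓ * ‖v‖ ^ 2 * t ^ 2 / 2 with hχ
  have hχd : ∀ t : ℝ, HasDerivAt χ (⟪G (x + t • v) - G x, v⟫ - ℓ * ‖v‖ ^ 2 * t) t := by
    intro t
    have h1 := derivPath hg x v t
    have h2 : HasDerivAt (fun t : ℝ => t * ⟪G x, v⟫) ⟪G x, v⟫ t := by
      simpa using (hasDerivAt_id t).mul_const (⟪G x, v⟫ : ℝ)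
    have h3 : HasDerivAt (fun t : ℝ => ℓ * ‖v‖ ^ 2 * t ^ 2 / 2) (ℓ * ‖v‖ ^ 2 * t) t := by
      have := ((hasDerivAt_pow 2 t).const_mul (ℓ * ‖v‖ ^ 2)).div_const 2
      exact this.congr_deriv (by push_cast; ring)
    have h4 := (h1.sub h2).sub h3
    exact h4.congr_deriv (by rw [inner_sub_left])
  have hderiv : ∀ t ∈ interior (Set.Icc (0:ℝ) 1), deriv χ t ≤ 0 := by
    intro t ht
    rw [interior_Icc] at ht
    rw [(hχd t).deriv]
    have ht0 : (0:ℝ) < t := ht.1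
    have hm := hmono (x + t • v) x
    rw [add_sub_cancel_left] at hm
    rw [real_inner_smul_right] at hm
    have hns : ‖t • v‖ ^ 2 = t ^ 2 * ‖v‖ ^ 2 := by
      rw [norm_smul, mul_pow, Real.norm_eq_abs, sq_abs]
    rw [hns] at hm
    nlinarith [hm, ht0]
  have hanti : AntitoneOn χ (Set.Icc (0:ℝ) 1) := by
    apply antitoneOn_of_deriv_nonpos (convex_Icc 0 1)
    · exact fun t _ => ((hχd t).differentiableAt.continuousAt).continuousWithinAt
    · exact fun t _ => ((hχd t).differentiableAt).differentiableWithinAt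
    · exact hderiv
  have h01 := hanti (Set.left_mem_Icc.mpr zero_le_one) (Set.right_mem_Icc.mpr zero_le_one)
    zero_le_one
  have hxv : x + (1:ℝ) • v = y := by rw [one_smul, hv]; abel
  have hx0 : x + (0:ℝ) • v = x := by simp
  simp only [hχ, hxv, hx0] at h01
  ring_nf at h01 ⊢
  linarith

lemma hasGradientAt_sub' {f₁ f₂ : Euc d → ℝ} {g₁ g₂ x : Euc d}
    (h1 : HasGradientAt f₁ g₁ x) (h2 : HasGradientAt f₂ g₂ x) :
    HasGradientAt (fun z => f₁ z - f₂ z) (g₁ - g₂) x := by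
  rw [hasGradientAt_iff_hasFDerivAt] at *
  rw [map_sub]
  exact h1.sub h2

lemma hasGradientAt_of_D {f : Euc d → ℝ} {g x : Euc d} (D : Euc d →L[ℝ] ℝ)
    (hD : HasFDerivAt f D x) (h : ∀ v, D v = ⟪g, v⟫) : HasGradientAt f g x := by
  rw [hasGradientAt_iff_hasFDerivAt]
  have hDg : InnerProductSpace.toDual ℝ (Euc d) g = D := by
    ext v
    simp [InnerProductSpace.toDual_apply_apply, h v]
  rw [hDg]
  exact hD

lemma gradLin (b : Euc d) (x : Euc d) : HasGradientAt (fun z : Euc d => (⟪b, z⟫ : ℝ)) b x := by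
  have : (fun z : Euc d => (⟪b, z⟫ : ℝ)) = ⇑(InnerProductSpace.toDual ℝ (Euc d) b) := by
    funext z; simp [InnerProductSpace.toDual_apply_apply]
  rw [this]
  exact hasGradientAt_of_D _ ((InnerProductSpace.toDual ℝ (Euc d) b).hasFDerivAt)
    (fun v => by simp [InnerProductSpace.toDual_apply_apply])

lemma inner_concaveOn (w : Euc d) : ConcaveOn ℝ Set.univ (fun z : Euc d => (⟪w, z⟫ : ℝ)) := by
  refine ⟨convex_univ, fun a _ b _ s t hs ht hst => ?_⟩
  show s • (⟪w, a⟫ : ℝ) + t • (⟪w, b⟫ : ℝ) ≤ (⟪w, s • a + t • b⟫ : ℝ)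
  rw [inner_add_right, real_inner_smul_right, real_inner_smul_right, smul_eq_mul, smul_eq_mul]

lemma coco_half {g : Euc d → ℝ} {G : Euc d → Euc d} {ℓ : ℝ} (hℓ : 0 < ℓ)
    (hconv : ConvexOn ℝ Set.univ g) (hg : ∀ z, HasGradientAt g (G z) z)
    (hmono : ∀ a b, ⟪G a - G b, a - b⟫ ≤ ℓ * ‖a - b‖ ^ 2) (x y : Euc d) :
    g x - ⟪G x, x⟫ + (2 * ℓ)⁻¹ * ‖G y - G x‖ ^ 2 ≤ g y - ⟪G x, y⟫ := by
  set h : Euc d → ℝ := fun z => g z - ⟪G x, z⟫ with hh_def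
  set H : Euc d → Euc d := fun z => G z - G x with hH_def
  have hh : ∀ z, HasGradientAt h (H z) z := fun z =>
    hasGradientAt_sub' (hg z) (gradLin (G x) z)
  have hhconv : ConvexOn ℝ Set.univ h := hconv.sub (inner_concaveOn (G x))
  have hhmono : ∀ a b, ⟪H a - H b, a - b⟫ ≤ ℓ * ‖a - b‖ ^ 2 := by
    intro a b
    have : H a - H b = G a - G b := by simp [hH_def]
    rw [this]
    exact hmono a b
  set w : Euc d := y - ℓ⁻¹ • H y with hw_def
  have h1 := grad_upper hℓ.le hh hhmono y w
  have h2 := grad_lower hhconv hh x w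
  have hwy : w - y = -(ℓ⁻¹ • H y) := by rw [hw_def]; abel
  have hiv : ⟪H y, w - y⟫ = -(ℓ⁻¹ * ‖H y‖ ^ 2) := by
    rw [hwy, inner_neg_right, real_inner_smul_right, real_inner_self_eq_norm_sq]
  have hnv : ‖w - y‖ ^ 2 = ℓ⁻¹ ^ 2 * ‖H y‖ ^ 2 := by
    rw [hwy, norm_neg, norm_smul, mul_pow, Real.norm_eq_abs, sq_abs]
  rw [hiv, hnv] at h1
  have hHx : H x = 0 := by simp [hH_def]
  rw [hHx, inner_zero_left, add_zero] at h2
  have key : h x ≤ h y - (2 * ℓ)⁻¹ * ‖H y‖ ^ 2 := by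
    have hℓ' : ℓ ≠ 0 := ne_of_gt hℓ
    have : ℓ / 2 * (ℓ⁻¹ ^ 2 * ‖H y‖ ^ 2) = (2 * ℓ)⁻¹ * ‖H y‖ ^ 2 := by
      field_simp
    rw [this] at h1
    have h2ℓ : ℓ⁻¹ * ‖H y‖ ^ 2 = (2 * ℓ)⁻¹ * ‖H y‖ ^ 2 + (2 * ℓ)⁻¹ * ‖H y‖ ^ 2 := by
      field_simp
      ring
    calc h x ≤ h w := h2
    _ ≤ h y + -(ℓ⁻¹ * ‖H y‖ ^ 2) + (2 * ℓ)⁻¹ * ‖H y‖ ^ 2 := h1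
    _ = h y - (2 * ℓ)⁻¹ * ‖H y‖ ^ 2 := by rw [h2ℓ]; ring
  simp only [hh_def, hH_def] at key
  linarith

lemma coco {g : Euc d → ℝ} {G : Euc d → Euc d} {ℓ : ℝ} (hℓ : 0 < ℓ)
    (hconv : ConvexOn ℝ Set.univ g) (hg : ∀ z, HasGradientAt g (G z) z)
    (hmono : ∀ a b, ⟪G a - G b, a - b⟫ ≤ ℓ * ‖a - b‖ ^ 2) (x y : Euc d) :
    ‖G x - G y‖ ^ 2 ≤ ℓ * ⟪G x - G y, x - y⟫ := by
  have A := coco_half hℓ hconv hg hmono x y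
  have B := coco_half hℓ hconv hg hmono y x
  rw [show G x - G y = -(G y - G x) from by abel, norm_neg] at B ⊢
  set D := G y - G x with hD
  have hexp : (⟪-D, x - y⟫ : ℝ) = ⟪G x, x⟫ - ⟪G x, y⟫ - ⟪G y, x⟫ + ⟪G y, y⟫ := by
    rw [hD, inner_neg_left, inner_sub_left, inner_sub_right, inner_sub_right]
    ring
  have hsum : ℓ⁻¹ * ‖D‖ ^ 2 ≤ ⟪-D, x - y⟫ := by
    rw [hexp]
    have : (2 * ℓ)⁻¹ * ‖D‖ ^ 2 + (2 * ℓ)⁻¹ * ‖D‖ ^ 2 = ℓ⁻¹ * ‖D‖ ^ 2 := by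
      field_simp; ring
    linarith
  have := mul_le_mul_of_nonneg_left hsum hℓ.le
  rw [← mul_assoc, mul_inv_cancel₀ (ne_of_gt hℓ), one_mul] at this
  exact this

lemma coco_lip {g : Euc d → ℝ} {G : Euc d → Euc d} {ℓ : ℝ} (hℓ : 0 < ℓ)
    (hconv : ConvexOn ℝ Set.univ g) (hg : ∀ z, HasGradientAt g (G z) z)
    (hmono : ∀ a b, ⟪G a - G b, a - b⟫ ≤ ℓ * ‖a - b‖ ^ 2) (x y : Euc d) :
    ‖G x - G y‖ ≤ ℓ * ‖x - y‖ := by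
  have h1 := coco hℓ hconv hg hmono x y
  have h2 := real_inner_le_norm (G x - G y) (x - y)
  rcases eq_or_lt_of_le (norm_nonneg (G x - G y)) with h0 | h0
  · rw [← h0]
    positivity
  · nlinarith [h1, h2, h0, mul_le_mul_of_nonneg_left h2 hℓ.le]

lemma gradQuad (τ : ℝ) (c y : Euc d) :
    HasGradientAt (fun y => τ / 2 * ‖y - c‖ ^ 2) (τ • (y - c)) y := by
  have hfun : (fun y : Euc d => τ / 2 * ‖y - c‖ ^ 2)
      = fun y : Euc d => τ / 2 * ⟪y - c, y - c⟫ := by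
    funext z; rw [real_inner_self_eq_norm_sq]
  rw [hfun]
  have h1 : HasFDerivAt (fun y : Euc d => (⟪y - c, y - c⟫ : ℝ))
      ((fderivInnerCLM ℝ (y - c, y - c)).comp
        ((ContinuousLinearMap.id ℝ (Euc d)).prod (ContinuousLinearMap.id ℝ (Euc d)))) y :=
    ((hasFDerivAt_id y).sub_const c).inner ℝ ((hasFDerivAt_id y).sub_const c)
  refine hasGradientAt_of_D _ (h1.const_mul (τ / 2)) fun v => ?_
  simp only [ContinuousLinearMap.coe_smul', Pi.smul_apply, ContinuousLinearMap.coe_comp',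
    Function.comp_apply, ContinuousLinearMap.prod_apply, ContinuousLinearMap.coe_id', id_eq,
    fderivInnerCLM_apply, real_inner_smul_left, smul_eq_mul]
  rw [real_inner_comm v (y - c)]
  ring

lemma hasGradientAt_add' {f₁ f₂ : Euc d → ℝ} {g₁ g₂ x : Euc d}
    (h1 : HasGradientAt f₁ g₁ x) (h2 : HasGradientAt f₂ g₂ x) :
    HasGradientAt (fun z => f₁ z + f₂ z) (g₁ + g₂) x := by
  rw [hasGradientAt_iff_hasFDerivAt] at *
  rw [map_add]
  exact h1.add h2

lemma hasGradientAt_const_mul' {f : Euc d → ℝ} {gf x : Euc d} (a : ℝ)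
    (h : HasGradientAt f gf x) : HasGradientAt (fun z => a * f z) (a • gf) x := by
  refine hasGradientAt_of_D (a • (InnerProductSpace.toDual ℝ (Euc d) gf)) ?_ fun v => ?_
  · exact (hasGradientAt_iff_hasFDerivAt.mp h).const_mul a
  · rw [ContinuousLinearMap.smul_apply, InnerProductSpace.toDual_apply_apply,
      real_inner_smul_left, smul_eq_mul]



lemma scalar_bound (m c μ L LF τ : ℝ) (K : ℕ)
    (hm : 2 ≤ m) (hc1 : 1 ≤ c) (hcm : c ≤ m) (hμ : 0 < μ) (hμL : μ < L)
    (hLF : LF = (L - μ) / m) (hτ : τ ≥ 8 / 3 * Real.sqrt (L * μ / (m * c)))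
    (hK : ((3:ℝ)/4 * Real.sqrt (c/m*(L/μ)) + 2) * Real.log (4*L/μ) ≤ (K:ℝ)) :
    (4*μ*LF^2/(3*m*τ^2) + LF*(LF+τ)^2/τ^2) * ((LF/(LF+τ))^K)^2 ≤ μ/(6*m) := by
  have hm0 : (0:ℝ) < m := by linarith
  have hc0 : (0:ℝ) < c := by linarith
  have hL0 : (0:ℝ) < L := hμ.trans hμL
  have hLF0 : 0 < LF := by rw [hLF]; apply div_pos (by linarith) hm0
  have hsq0 : 0 < Real.sqrt (L * μ / (m * c)) := Real.sqrt_pos.mpr (by positivity)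
  have hτ0 : 0 < τ := by linarith
  set s : ℝ := Real.sqrt (c/m*(L/μ)) with hs_def
  set t : ℝ := Real.sqrt (L/μ) with ht_def
  set ℓ : ℝ := Real.log (4*L/μ) with hℓ_def
  have hs0 : 0 ≤ s := Real.sqrt_nonneg _
  have hLμ1 : 1 ≤ L/μ := by rw [le_div_iff₀ hμ]; linarith
  have ht1 : 1 ≤ t := by
    rw [ht_def, show (1:ℝ) = Real.sqrt 1 from (Real.sqrt_one).symm]
    exact Real.sqrt_le_sqrt hLμ1
  have ht2 : t^2 = L/μ := Real.sq_sqrt (by positivity)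
  have ht2' : μ * t^2 = L := by rw [ht2]; field_simp
  have hst : s ≤ t := by
    rw [hs_def, ht_def]
    apply Real.sqrt_le_sqrt
    have h1 : c/m ≤ 1 := (div_le_one hm0).mpr hcm
    exact mul_le_of_le_one_left (by positivity) h1
  have hℓ0 : 0 ≤ ℓ := Real.log_nonneg (by rw [le_div_iff₀ hμ]; linarith)
  -- key : LF ≤ (3/8) * s * τ
  have key1 : s * Real.sqrt (L * μ / (m * c)) = L/m := by
    rw [hs_def, ← Real.sqrt_mul (by positivity)]
    rw [show c/m*(L/μ) * (L * μ / (m * c)) = (L/m)^2 by field_simp]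
    exact Real.sqrt_sq (by positivity)
  have key2 : LF ≤ L/m := by
    rw [hLF, div_le_div_iff₀ hm0 hm0]
    have := mul_le_mul_of_nonneg_right (show L - μ ≤ L by linarith) hm0.le
    linarith
  have hb : LF ≤ 3/8 * s * τ := by
    have h1 : LF ≤ 3/8 * s * (8/3 * Real.sqrt (L * μ / (m * c))) := by
      rw [show 3/8 * s * (8/3 * Real.sqrt (L * μ / (m * c)))
          = s * Real.sqrt (L * μ / (m * c)) by ring, key1]
      exact key2
    calc LF ≤ 3/8 * s * (8/3 * Real.sqrt (L * μ / (m * c))) := h1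
      _ ≤ 3/8 * s * τ := mul_le_mul_of_nonneg_left hτ (by positivity)
  have hbt : LF ≤ 3/8 * t * τ := by
    have h1 : 3/8 * s * τ ≤ 3/8 * t * τ :=
      mul_le_mul_of_nonneg_right (by linarith) hτ0.le
    linarith
  -- contraction factor bound
  set ρ : ℝ := LF/(LF+τ) with hρ_def
  have hρ0 : 0 ≤ ρ := by positivity
  have hLFτ0 : 0 < LF + τ := by linarith
  set θ : ℝ := τ/(LF+τ) with hθ_def
  have hρθ : ρ = 1 - θ := by
    rw [hρ_def, hθ_def, eq_sub_iff_add_eq, ← add_div, div_self (ne_of_gt hLFτ0)]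
  have hρ_exp : ρ ≤ Real.exp (-θ) := by
    rw [hρθ]
    linarith [Real.add_one_le_exp (-θ)]
  have hρK : ρ^K ≤ Real.exp ((K:ℝ) * (-θ)) := by
    calc ρ^K ≤ (Real.exp (-θ))^K := pow_le_pow_left₀ hρ0 hρ_exp K
      _ = Real.exp ((K:ℝ) * (-θ)) := (Real.exp_nat_mul (-θ) K).symm
  have hθK : 2*ℓ ≤ (K:ℝ) * θ := by
    rw [hθ_def, ← mul_div_assoc, le_div_iff₀ hLFτ0]
    have h1 : 2*ℓ*(LF+τ) ≤ 2*ℓ*((1 + 3/8*s)*τ) := by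
      apply mul_le_mul_of_nonneg_left _ (by positivity)
      have he : (1 + 3/8*s)*τ = τ + 3/8*s*τ := by ring
      linarith [hb]
    have h2 : 2*ℓ*((1 + 3/8*s)*τ) = ((3/4*s + 2)*ℓ)*τ := by ring
    calc 2*ℓ*(LF+τ) ≤ ((3/4*s + 2)*ℓ)*τ := by rw [← h2]; exact h1
      _ ≤ (K:ℝ)*τ := mul_le_mul_of_nonneg_right hK hτ0.le
  have hρK2 : ρ^K ≤ (μ/(4*L))^2 := by
    have h1 : Real.exp ((K:ℝ) * (-θ)) ≤ Real.exp (-(2*ℓ)) := by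
      apply Real.exp_le_exp.mpr
      linarith
    have h2 : Real.exp (-(2*ℓ)) = (μ/(4*L))^2 := by
      rw [show -(2*ℓ) = -ℓ + -ℓ by ring, Real.exp_add, Real.exp_neg, hℓ_def,
        Real.exp_log (by positivity)]
      rw [show (4*L/μ)⁻¹ = μ/(4*L) by rw [inv_div]]
      ring
    calc ρ^K ≤ Real.exp ((K:ℝ) * (-θ)) := hρK
      _ ≤ Real.exp (-(2*ℓ)) := h1
      _ = (μ/(4*L))^2 := h2
  have hρK4 : (ρ^K)^2 ≤ ((μ/(4*L))^2)^2 := pow_le_pow_left₀ (by positivity) hρK2 2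
  -- bracket bound
  have hLF2' : μ * LF^2 ≤ 9/64 * L * τ^2 := by
    have hsq : LF^2 ≤ (3/8*t*τ)^2 := pow_le_pow_left₀ hLF0.le hbt 2
    have h1 : μ * LF^2 ≤ μ * (3/8*t*τ)^2 := mul_le_mul_of_nonneg_left hsq hμ.le
    calc μ * LF^2 ≤ μ * (3/8*t*τ)^2 := h1
      _ = 9/64 * (μ * t^2) * τ^2 := by ring
      _ = 9/64 * L * τ^2 := by rw [ht2']
  have hLFτ2 : (LF+τ)^2 ≤ 121/64*(L/μ)*τ^2 := by
    have hτt : τ ≤ t*τ := le_mul_of_one_le_left hτ0.le ht1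
    have h1 : LF + τ ≤ 11/8*t*τ := by linarith [hbt]
    have hsq : (LF+τ)^2 ≤ (11/8*t*τ)^2 := pow_le_pow_left₀ hLFτ0.le h1 2
    calc (LF+τ)^2 ≤ (11/8*t*τ)^2 := hsq
      _ = 121/64*t^2*τ^2 := by ring
      _ = 121/64*(L/μ)*τ^2 := by rw [ht2]
  have hB : 4*μ*LF^2/(3*m*τ^2) + LF*(LF+τ)^2/τ^2 ≤ 3*L^2/(m*μ) := by
    have t1 : 4*μ*LF^2/(3*m*τ^2) ≤ 3/16*L/m := by
      rw [div_le_div_iff₀ (by positivity) hm0]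
      have := mul_le_mul_of_nonneg_left hLF2' (show (0:ℝ) ≤ 4*m by positivity)
      linarith
    have t2 : LF*(LF+τ)^2/τ^2 ≤ 121/64*(L/m)*(L/μ) := by
      rw [div_le_iff₀ (by positivity)]
      calc LF*(LF+τ)^2 ≤ (L/m)*(121/64*(L/μ)*τ^2) :=
            mul_le_mul key2 hLFτ2 (by positivity) (by positivity)
        _ = 121/64*(L/m)*(L/μ)*τ^2 := by ring
    have e1 : (L/m)*(L/μ) = L^2/(m*μ) := by field_simp
    have hA0 : (0:ℝ) < L/m := by positivity
    have hAB : L/m ≤ (L/m)*(L/μ) := le_mul_of_one_le_right hA0.le hLμ1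
    have h3 : 3/16*(L/m) + 121/64*((L/m)*(L/μ)) ≤ 3*((L/m)*(L/μ)) := by
      have hAB0 : (0:ℝ) ≤ (L/m)*(L/μ) := by positivity
      linarith
    have h4 : (3:ℝ)/16*L/m = 3/16*(L/m) := by ring
    have e2 : 3*L^2/(m*μ) = 3*((L/m)*(L/μ)) := by field_simp
    rw [e2]
    calc 4*μ*LF^2/(3*m*τ^2) + LF*(LF+τ)^2/τ^2
        ≤ 3/16*(L/m) + 121/64*((L/m)*(L/μ)) := by
          rw [← h4]
          have : 121/64*(L/m)*(L/μ) = 121/64*((L/m)*(L/μ)) := by ring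
          rw [← this]
          exact add_le_add t1 t2
      _ ≤ 3*((L/m)*(L/μ)) := h3
  -- final combination
  have hB0 : 0 ≤ 4*μ*LF^2/(3*m*τ^2) + LF*(LF+τ)^2/τ^2 := by positivity
  have hfin : 3*L^2/(m*μ) * ((μ/(4*L))^2)^2 ≤ μ/(6*m) := by
    have e : 3*L^2/(m*μ) * ((μ/(4*L))^2)^2 = 3*μ^3/(256*L^2*m) := by
      field_simp
      ring
    rw [e, div_le_div_iff₀ (by positivity) (by positivity)]
    have hμ2L2 : μ^2 ≤ L^2 := pow_le_pow_left₀ hμ.le hμL.le 2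
    have h5 := mul_le_mul_of_nonneg_left hμ2L2 (show (0:ℝ) ≤ 18*μ*m by positivity)
    have h6 : (0:ℝ) ≤ μ*L^2*m := by positivity
    linarith
  calc (4*μ*LF^2/(3*m*τ^2) + LF*(LF+τ)^2/τ^2) * (ρ^K)^2
      ≤ (4*μ*LF^2/(3*m*τ^2) + LF*(LF+τ)^2/τ^2) * ((μ/(4*L))^2)^2 :=
        mul_le_mul_of_nonneg_left hρK4 hB0
    _ ≤ 3*L^2/(m*μ) * ((μ/(4*L))^2)^2 :=
        mul_le_mul_of_nonneg_right hB (by positivity)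
    _ ≤ μ/(6*m) := hfin

end Helpers

open scoped RealInnerProductSpace

/-- **Local-solver guarantee for Theorem 2.** With `τ ≥ (8/3)√(Lμ/(MC))`, `ψ_m` the local
objective centered at `x̂ + u_m/τ` with minimizer `y⋆_m`, and `y^K` the `K`-th iterate of GD
on `ψ_m` with stepsize `1/(L_F+τ)` started at `x̂`, if
`K ≥ ((3/4)√((C/M)(L/μ)) + 2)·log(4L/μ)` then
`(4μL_F²/(3Mτ²))‖y^K − y⋆_m‖² + (L_F/τ²)‖∇ψ_m(y^K)‖² ≤ (μ/(6M))‖x̂ − y⋆_m‖²`. -/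
theorem stmt16
    (d M C : ℕ) (hM : 2 ≤ M) (hC1 : 1 ≤ C) (hCM : C ≤ M)
    (μ L : ℝ) (hμ : 0 < μ) (hμL : μ < L)
    (fm : Euc d → ℝ) (hdiff : Differentiable ℝ fm)
    (hsc : ConvexOn ℝ Set.univ fun x => fm x - μ / 2 * ‖x‖ ^ 2)
    (hsmooth : ∀ x y, ‖gradient fm x - gradient fm y‖ ≤ L * ‖x - y‖)
    (Fm : Euc d → ℝ) (hF : ∀ x, Fm x = (1 / (M : ℝ)) * (fm x - μ / 2 * ‖x‖ ^ 2))
    (LF : ℝ) (hLF : LF = (L - μ) / (M : ℝ))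
    (τ : ℝ) (hτ : τ ≥ 8 / 3 * Real.sqrt (L * μ / ((M : ℝ) * (C : ℝ))))
    (xh um : Euc d)
    (ψ : Euc d → ℝ) (hψ : ∀ y, ψ y = Fm y + τ / 2 * ‖y - (xh + τ⁻¹ • um)‖ ^ 2)
    (ystar : Euc d) (hystar : ∀ y, ψ ystar ≤ ψ y)
    (K : ℕ)
    (hK : ((3 : ℝ) / 4 * Real.sqrt ((C : ℝ) / (M : ℝ) * (L / μ)) + 2) *
        Real.log (4 * L / μ) ≤ (K : ℝ)) :
    4 * μ * LF ^ 2 / (3 * (M : ℝ) * τ ^ 2) * ‖gdIter d (1 / (LF + τ)) ψ xh K - ystar‖ ^ 2 +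
        LF / τ ^ 2 * ‖gradient ψ (gdIter d (1 / (LF + τ)) ψ xh K)‖ ^ 2 ≤
      μ / (6 * (M : ℝ)) * ‖xh - ystar‖ ^ 2 := by
  have hM0 : (0:ℝ) < M := by positivity
  have hM2 : (2:ℝ) ≤ (M:ℝ) := by exact_mod_cast hM
  have hC0 : (0:ℝ) < C := by
    have : (1:ℝ) ≤ (C:ℝ) := by exact_mod_cast hC1
    linarith
  have hL0 : (0:ℝ) < L := hμ.trans hμL
  have hLF0 : 0 < LF := by rw [hLF]; apply div_pos (by linarith) hM0
  have hτ0 : 0 < τ := by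
    have h1 : 0 < Real.sqrt (L * μ / ((M : ℝ) * (C : ℝ))) :=
      Real.sqrt_pos.mpr (by positivity)
    linarith [hτ]
  have hη0 : 0 < 1 / (LF + τ) := by positivity
  set η : ℝ := 1 / (LF + τ) with hη_def
  set cc : Euc d := xh + τ⁻¹ • um with hcc_def
  -- gradient of Fm
  set GF : Euc d → Euc d := fun z => (M:ℝ)⁻¹ • (gradient fm z - μ • z) with hGF_def
  have hGF : ∀ z, HasGradientAt Fm (GF z) z := by
    intro z
    have hq := gradQuad (d := d) μ 0 z
    simp only [sub_zero] at hq
    have hsub := hasGradientAt_sub' (hdiff z).hasGradientAt hq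
    have hmul := hasGradientAt_const_mul' (1 / (M:ℝ)) hsub
    have hfun : Fm = fun x => (1 / (M:ℝ)) * (fm x - μ / 2 * ‖x‖ ^ 2) := funext hF
    rw [hfun]
    convert hmul using 1
    rw [one_div]
  -- gradient of ψ
  set Gψ : Euc d → Euc d := fun z => GF z + τ • (z - cc) with hGψ_def
  have hGψ : ∀ z, HasGradientAt ψ (Gψ z) z := by
    intro z
    have hfun : ψ = fun y => Fm y + τ / 2 * ‖y - cc‖ ^ 2 := funext hψ
    rw [hfun]
    exact hasGradientAt_add' (hGF z) (gradQuad τ cc z)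
  have hψgrad : ∀ z, gradient ψ z = Gψ z := fun z => (hGψ z).gradient
  -- convexity of Fm
  have hFmconv : ConvexOn ℝ Set.univ Fm := by
    have h := hsc.smul (show (0:ℝ) ≤ 1 / (M:ℝ) by positivity)
    have hFm_eq : Fm = fun x => (1 / (M:ℝ)) * (fm x - μ / 2 * ‖x‖ ^ 2) := funext hF
    rw [hFm_eq]
    simpa using h
  -- monotonicity bound for GF
  have hmonoF : ∀ a b : Euc d, ⟪GF a - GF b, a - b⟫ ≤ LF * ‖a - b‖ ^ 2 := by
    intro a b
    have hGFd : GF a - GF b = (M:ℝ)⁻¹ • ((gradient fm a - gradient fm b) - μ • (a - b)) := by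
      simp only [hGF_def]
      module
    rw [hGFd, real_inner_smul_left, inner_sub_left, real_inner_smul_left,
      real_inner_self_eq_norm_sq]
    have hcs : ⟪gradient fm a - gradient fm b, a - b⟫ ≤ L * ‖a - b‖ ^ 2 := by
      calc ⟪gradient fm a - gradient fm b, a - b⟫
          ≤ ‖gradient fm a - gradient fm b‖ * ‖a - b‖ := real_inner_le_norm _ _
        _ ≤ L * ‖a - b‖ * ‖a - b‖ :=
            mul_le_mul_of_nonneg_right (hsmooth a b) (norm_nonneg _)
        _ = L * ‖a - b‖ ^ 2 := by ring
    rw [hLF]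
    have hMinv : (0:ℝ) ≤ (M:ℝ)⁻¹ := by positivity
    calc (M:ℝ)⁻¹ * (⟪gradient fm a - gradient fm b, a - b⟫ - μ * ‖a - b‖ ^ 2)
        ≤ (M:ℝ)⁻¹ * (L * ‖a - b‖ ^ 2 - μ * ‖a - b‖ ^ 2) := by
          apply mul_le_mul_of_nonneg_left _ hMinv
          linarith
      _ = (L - μ) / (M:ℝ) * ‖a - b‖ ^ 2 := by field_simp
  have hcocoF := coco hLF0 hFmconv hGF hmonoF
  have hlipF := coco_lip hLF0 hFmconv hGF hmonoF
  -- gradient vanishes at the minimizer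
  have hstar0 : Gψ ystar = 0 := by
    have hmin : IsLocalMin ψ ystar := Filter.Eventually.of_forall hystar
    have := hmin.hasFDerivAt_eq_zero (hGψ ystar).hasFDerivAt
    have h2 := congrArg (InnerProductSpace.toDual ℝ (Euc d)).symm this
    simpa using h2
  set ρ : ℝ := LF / (LF + τ) with hρ_def
  have hρ0 : 0 ≤ ρ := by positivity
  -- one-step contraction
  have hstep : ∀ z : Euc d, ‖z - η • Gψ z - ystar‖ ≤ ρ * ‖z - ystar‖ := by
    intro z
    have hGψz : Gψ z = (GF z - GF ystar) + τ • (z - ystar) := by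
      have e1 : Gψ z = (GF z - GF ystar) + τ • (z - ystar) + (GF ystar + τ • (ystar - cc)) := by
        simp only [hGψ_def]
        module
      rw [e1]
      rw [show GF ystar + τ • (ystar - cc) = Gψ ystar from rfl, hstar0, add_zero]
    set r : Euc d := z - ystar with hr_def
    set Gd : Euc d := GF z - GF ystar with hGd_def
    have hvec : z - η • Gψ z - ystar = (1 - η * τ) • r - η • Gd := by
      rw [hGψz]
      simp only [hr_def, hGd_def]
      module
    rw [hvec]
    have hexp : ‖(1 - η * τ) • r - η • Gd‖ ^ 2
        = (1 - η * τ)^2 * ‖r‖^2 - 2 * ((1 - η * τ) * η * ⟪Gd, r⟫) + η^2 * ‖Gd‖^2 := by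
      rw [norm_sub_sq_real, norm_smul, norm_smul, real_inner_smul_left, real_inner_smul_right]
      rw [real_inner_comm r Gd]
      simp only [Real.norm_eq_abs, mul_pow, sq_abs]
      ring
    have hcc1 : ‖Gd‖^2 ≤ LF * ⟪Gd, r⟫ := hcocoF z ystar
    have hGdr0 : 0 ≤ ⟪Gd, r⟫ := by nlinarith [sq_nonneg ‖Gd‖, hcc1, hLF0]
    have hone : 1 - η * τ = LF * η := by
      rw [hη_def]
      field_simp
      ring
    have hsq : ‖(1 - η * τ) • r - η • Gd‖ ^ 2 ≤ (ρ * ‖r‖)^2 := by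
      rw [hexp]
      have hρη : ρ = LF * η := by rw [hρ_def, hη_def]; field_simp
      rw [hone, ← hρη]
      have hkey : η^2 * ‖Gd‖^2 ≤ 2 * (ρ * η * ⟪Gd, r⟫) := by
        have h1 : η^2 * ‖Gd‖^2 ≤ η^2 * (LF * ⟪Gd, r⟫) :=
          mul_le_mul_of_nonneg_left hcc1 (by positivity)
        have h2 : η^2 * (LF * ⟪Gd, r⟫) = ρ * η * ⟪Gd, r⟫ := by
          rw [hρη]; ring
        nlinarith [mul_nonneg (mul_nonneg hρ0 hη0.le) hGdr0]
      nlinarith [hkey]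
    have := le_of_pow_le_pow_left₀ two_ne_zero (by positivity : (0:ℝ) ≤ ρ * ‖r‖) hsq
    exact this
  -- iterate contraction
  have hiter : ∀ k : ℕ, ‖gdIter d η ψ xh k - ystar‖ ≤ ρ^k * ‖xh - ystar‖ := by
    intro k
    induction k with
    | zero => simp [gdIter]
    | succ n ih =>
      have hrec : gdIter d η ψ xh (n+1)
          = gdIter d η ψ xh n - η • gradient ψ (gdIter d η ψ xh n) := rfl
      rw [hrec, hψgrad]
      calc ‖gdIter d η ψ xh n - η • Gψ (gdIter d η ψ xh n) - ystar‖
          ≤ ρ * ‖gdIter d η ψ xh n - ystar‖ := hstep _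
        _ ≤ ρ * (ρ^n * ‖xh - ystar‖) := mul_le_mul_of_nonneg_left ih hρ0
        _ = ρ^(n+1) * ‖xh - ystar‖ := by ring
  set yK : Euc d := gdIter d η ψ xh K with hyK_def
  have hRK : ‖yK - ystar‖ ≤ ρ^K * ‖xh - ystar‖ := hiter K
  have hgb : ‖gradient ψ yK‖ ≤ (LF + τ) * ‖yK - ystar‖ := by
    rw [hψgrad]
    have hGψz : Gψ yK = (GF yK - GF ystar) + τ • (yK - ystar) := by
      have e1 : Gψ yK = (GF yK - GF ystar) + τ • (yK - ystar)
          + (GF ystar + τ • (ystar - cc)) := by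
        simp only [hGψ_def]; module
      rw [e1, show GF ystar + τ • (ystar - cc) = Gψ ystar from rfl, hstar0, add_zero]
    rw [hGψz]
    calc ‖(GF yK - GF ystar) + τ • (yK - ystar)‖
        ≤ ‖GF yK - GF ystar‖ + ‖τ • (yK - ystar)‖ := norm_add_le _ _
      _ ≤ LF * ‖yK - ystar‖ + τ * ‖yK - ystar‖ := by
          apply add_le_add (hlipF yK ystar)
          rw [norm_smul, Real.norm_eq_abs, abs_of_pos hτ0]
      _ = (LF + τ) * ‖yK - ystar‖ := by ring
  -- final combination
  have hsb := scalar_bound (M:ℝ) (C:ℝ) μ L LF τ K hM2 (by exact_mod_cast hC1)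
    (by exact_mod_cast hCM) hμ hμL hLF hτ hK
  set R := ‖yK - ystar‖ with hR_def
  set r0 := ‖xh - ystar‖ with hr0_def
  have hR0 : 0 ≤ R := norm_nonneg _
  have hr00 : 0 ≤ r0 := norm_nonneg _
  have hR2 : R^2 ≤ (ρ^K)^2 * r0^2 := by
    have := mul_self_le_mul_self hR0 hRK
    calc R^2 = R * R := sq R
      _ ≤ (ρ^K * r0) * (ρ^K * r0) := this
      _ = (ρ^K)^2 * r0^2 := by ring
  have hg2 : ‖gradient ψ yK‖^2 ≤ (LF + τ)^2 * R^2 := by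
    have := mul_self_le_mul_self (norm_nonneg _) hgb
    calc ‖gradient ψ yK‖^2 = ‖gradient ψ yK‖ * ‖gradient ψ yK‖ := sq _
      _ ≤ ((LF + τ) * R) * ((LF + τ) * R) := this
      _ = (LF + τ)^2 * R^2 := by ring
  have hc1 : (0:ℝ) ≤ 4 * μ * LF ^ 2 / (3 * (M : ℝ) * τ ^ 2) := by positivity
  have hc2 : (0:ℝ) ≤ LF / τ ^ 2 := by positivity
  calc 4 * μ * LF ^ 2 / (3 * (M : ℝ) * τ ^ 2) * R ^ 2 + LF / τ ^ 2 * ‖gradient ψ yK‖ ^ 2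
      ≤ 4 * μ * LF ^ 2 / (3 * (M : ℝ) * τ ^ 2) * ((ρ^K)^2 * r0^2)
        + LF / τ ^ 2 * ((LF + τ)^2 * ((ρ^K)^2 * r0^2)) := by
        apply add_le_add
        · exact mul_le_mul_of_nonneg_left hR2 hc1
        · apply mul_le_mul_of_nonneg_left _ hc2
          calc ‖gradient ψ yK‖^2 ≤ (LF + τ)^2 * R^2 := hg2
            _ ≤ (LF + τ)^2 * ((ρ^K)^2 * r0^2) := by
                apply mul_le_mul_of_nonneg_left hR2 (by positivity)
    _ = (4*μ*LF^2/(3*(M:ℝ)*τ^2) + LF*(LF+τ)^2/τ^2) * ((LF/(LF+τ))^K)^2 * r0^2 := by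
        rw [hρ_def]; ring
    _ ≤ μ/(6*(M:ℝ)) * r0^2 := by
        apply mul_le_mul_of_nonneg_right hsb (by positivity)
end
end
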